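/- Let K be a totally real number field of degree n over ℚ with integral basis α₁,…,αₙ and real embeddings σ₁,…,σₙ. Then there exists (x₁,…,xₙ) ∈ ℤⁿ \ {0} such that α = x₁α₁ + ··· + xₙαₙ satisfies |σ₁(α)| < 1 and |σⱼ(α)| ≤ |D_K|^{1/(2n−2)} for j = 2,…,n; for such α one has α ∉ ℤ. -/

import Mathlib

/-!
Minkowski's convex body theorem for the box `|x₁| < 1`, `|xⱼ| < C + ε` (`j ≥ 2`) in `ℝⁿ`, of
volume `2ⁿ (C + ε)ⁿ⁻¹ > 2ⁿ √|D_K|` when `Cⁿ⁻¹ = √|D_K|`, gives for every `ε > 0` a nonzero integer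
`α` of `K` in the box. All these `α` lie in the bounded box with `ε = 1`, which contains only
finitely many integers, so one of them works for arbitrarily small `ε` and satisfies the
non-strict bounds `|σⱼ(α)| ≤ C`. Finally a nonzero rational integer has `|σ₁(α)| ≥ 1`.
-/

open Filter Topology
open scoped NNReal

theorem Set.Finite.exists_forall_le_of_frequently_forall_lt {α ι : Type*} {s : Set α}
    (hs : s.Finite) {f : α → ι → ℝ} {c : ℝ}
    (h : ∃ᶠ ε in 𝓝[>] 0, ∃ a ∈ s, ∀ i, f a i < c + ε) :
    ∃ a ∈ s, ∀ i, f a i ≤ c := by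
  obtain ⟨a, ha, hfreq⟩ := hs.frequently_exists.mp h
  refine ⟨a, ha, fun i => le_of_forall_pos_lt_add fun δ hδ => ?_⟩
  obtain ⟨ε, hlt, hεδ⟩ := (hfreq.and_eventually (Ioo_mem_nhdsGT hδ)).exists
  exact (hlt i).trans (by linarith [hεδ.2])

theorem NNReal.rpow_one_div_two_mul_pow (x : ℝ≥0) {m : ℕ} (hm : m ≠ 0) :
    (x ^ (1 / (2 * m : ℝ))) ^ m = NNReal.sqrt x := by
  rw [← NNReal.rpow_natCast, ← NNReal.rpow_mul, NNReal.sqrt_eq_rpow]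
  congr 1
  field_simp

theorem RingHom.ne_intCast_of_abs_lt_one {R : Type*} [Ring R] (σ : R →+* ℝ) {a : R} (ha : a ≠ 0)
    (h : |σ a| < 1) (m : ℤ) : a ≠ m := by
  rintro rfl
  rw [map_intCast, ← Int.cast_abs, ← Int.cast_one, Int.cast_lt, Int.abs_lt_one_iff] at h
  simp [h] at ha

namespace NumberField

variable {K : Type*} [Field K]

noncomputable def InfinitePlace.ofRealEmbedding (σ : K →+* ℝ) : InfinitePlace K :=
  InfinitePlace.mk (Complex.ofRealHom.comp σ)

theorem InfinitePlace.ofRealEmbedding_apply (σ : K →+* ℝ) (x : K) :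
    ofRealEmbedding σ x = |σ x| :=
  Complex.norm_real _

theorem InfinitePlace.ofRealEmbedding_injective :
    Function.Injective (ofRealEmbedding (K := K)) := by
  intro σ τ h
  have hreal : ComplexEmbedding.IsReal (Complex.ofRealHom.comp σ) :=
    ComplexEmbedding.isReal_iff.mpr (by ext; simp [ComplexEmbedding.conjugate_coe_eq])
  have : Complex.ofRealHom.comp σ = Complex.ofRealHom.comp τ := by
    rcases mk_eq_iff.mp h with h' | h'
    · exact h'
    · rwa [ComplexEmbedding.isReal_iff.mp hreal] at h'
  ext x
  simpa using DFunLike.congr_fun this x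

variable [NumberField K]

theorem finite_setOf_forall_infinitePlace_le (B : ℝ) :
    {a : 𝓞 K | ∀ w : InfinitePlace K, w a ≤ B}.Finite := by
  refine Set.Finite.of_finite_image ?_ RingOfIntegers.coe_injective.injOn
  refine (Embeddings.finite_of_norm_le K ℂ B).subset ?_
  rintro _ ⟨a, ha, rfl⟩
  exact ⟨a.isIntegral_coe, fun φ => ha (InfinitePlace.mk φ)⟩

open mixedEmbedding in
theorem exists_ne_zero_forall_lt_of_sqrt_discr_lt_prod [IsTotallyReal K]
    {f : InfinitePlace K → ℝ≥0} (h : NNReal.sqrt ‖discr K‖₊ < ∏ w, f w) :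
    ∃ a : 𝓞 K, a ≠ 0 ∧ ∀ w : InfinitePlace K, w a < f w := by
  classical
  apply exists_ne_zero_mem_ringOfIntegers_lt
  rw [convexBodyLT_volume, minkowskiBound, volume_fundamentalDomain_fractionalIdealLatticeBasis,
    volume_fundamentalDomain_latticeBasis, mixedEmbedding.finrank, IsTotallyReal.finrank]
  simp only [IsTotallyReal.nrComplexPlaces_eq_zero, IsTotallyReal.mult_eq, convexBodyLTFactor,
    pow_zero, pow_one, mul_one, one_mul, Units.val_one, FractionalIdeal.absNorm_one, Rat.cast_one,
    ENNReal.ofReal_one]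
  rw [mul_comm, ← ENNReal.coe_ofNat, ← ENNReal.coe_pow, ← ENNReal.coe_mul, ← ENNReal.coe_mul,
    ENNReal.coe_lt_coe]
  exact mul_lt_mul_of_pos_left h (by positivity)

theorem exists_ne_zero_lt_one_and_forall_lt [IsTotallyReal K] (w₁ : InfinitePlace K) {C : ℝ≥0}
    (hC : NNReal.sqrt ‖discr K‖₊ < C ^ (Fintype.card (InfinitePlace K) - 1)) :
    ∃ a : 𝓞 K, a ≠ 0 ∧ w₁ a < 1 ∧ ∀ w ≠ w₁, w a < C := by
  classical
  obtain ⟨a, ha0, ha⟩ := exists_ne_zero_forall_lt_of_sqrt_discr_lt_prod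
    (f := Function.update (fun _ => C) w₁ 1) (by
      rwa [Finset.prod_update_of_mem (Finset.mem_univ _), one_mul, Finset.prod_const,
        Finset.card_sdiff_of_subset (by simp), Finset.card_singleton, Finset.card_univ])
  refine ⟨a, ha0, by simpa using ha w₁, fun w hw => ?_⟩
  simpa [Function.update_of_ne hw] using ha w

theorem exists_ne_zero_lt_one_and_forall_le [IsTotallyReal K] (w₁ : InfinitePlace K)
    (hcard : 1 < Fintype.card (InfinitePlace K)) {C : ℝ≥0}
    (hC : NNReal.sqrt ‖discr K‖₊ ≤ C ^ (Fintype.card (InfinitePlace K) - 1)) :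
    ∃ a : 𝓞 K, a ≠ 0 ∧ w₁ a < 1 ∧ ∀ w ≠ w₁, w a ≤ C := by
  set s := {a : 𝓞 K | a ≠ 0 ∧ w₁ a < 1 ∧ ∀ w : InfinitePlace K, w a ≤ C + 1}
  have hs : s.Finite := (finite_setOf_forall_infinitePlace_le (C + 1)).subset fun a ha => ha.2.2
  have hfreq : ∃ᶠ ε in 𝓝[>] (0 : ℝ), ∃ a ∈ s, ∀ w : {w // w ≠ w₁}, w.1 a < C + ε := by
    refine Eventually.frequently ?_
    filter_upwards [Ioo_mem_nhdsGT one_pos] with ε ⟨hε0, hε1⟩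
    have hCε : NNReal.sqrt ‖discr K‖₊ < (C + ε.toNNReal) ^ (Fintype.card (InfinitePlace K) - 1) :=
      hC.trans_lt (pow_lt_pow_left₀ (lt_add_of_pos_right C (Real.toNNReal_pos.mpr hε0))
        zero_le (by omega))
    obtain ⟨a, ha0, ha1, ha⟩ := exists_ne_zero_lt_one_and_forall_lt w₁ hCε
    simp only [NNReal.coe_add, Real.coe_toNNReal ε hε0.le] at ha
    refine ⟨a, ⟨ha0, ha1, fun w => ?_⟩, fun w => ha w.1 w.2⟩
    by_cases hw : w = w₁
    · subst hw; linarith [C.coe_nonneg]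
    · linarith [ha w hw]
  obtain ⟨a, ⟨ha0, ha1, -⟩, ha⟩ := hs.exists_forall_le_of_frequently_forall_lt hfreq
  exact ⟨a, ha0, ha1, fun w hw => ha ⟨w, hw⟩⟩

end NumberField

open NumberField NumberField.InfinitePlace

theorem minkowski_small_element_totally_real
    (K : Type*) [Field K] [NumberField K]
    (n : ℕ) (hn : Module.finrank ℚ K = n) (hn2 : 2 ≤ n)
    (htr : ∀ φ : K →+* ℂ, NumberField.ComplexEmbedding.IsReal φ)
    (b : Module.Basis (Fin n) ℤ (NumberField.RingOfIntegers K))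
    (σ : Fin n → (K →+* ℝ)) (hσ : Function.Injective σ) :
    ∃ x : Fin n → ℤ, x ≠ 0 ∧
      |σ ⟨0, by omega⟩ (∑ i, x i • ((b i : K)))| < 1 ∧
      (∀ j : Fin n, j ≠ ⟨0, by omega⟩ →
        |σ j (∑ i, x i • ((b i : K)))| ≤
          |(NumberField.discr K : ℝ)| ^ ((1 : ℝ) / (2 * n - 2))) ∧
      (∀ m : ℤ, (∑ i, x i • ((b i : K))) ≠ (m : K)) := by
  have : IsTotallyReal K := ⟨fun w => isReal_iff.mpr (htr _)⟩
  have hcard : Fintype.card (InfinitePlace K) = n := by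
    rw [card_eq_nrRealPlaces_add_nrComplexPlaces, IsTotallyReal.nrComplexPlaces_eq_zero,
      add_zero, ← IsTotallyReal.finrank, hn]
  set C : ℝ≥0 := ‖discr K‖₊ ^ (1 / (2 * (n - 1 : ℕ) : ℝ))
  have hC : NNReal.sqrt ‖discr K‖₊ ≤ C ^ (Fintype.card (InfinitePlace K) - 1) := by
    rw [hcard, NNReal.rpow_one_div_two_mul_pow _ (by omega)]
  obtain ⟨a, ha0, ha1, haC⟩ := exists_ne_zero_lt_one_and_forall_le
    (InfinitePlace.ofRealEmbedding (σ ⟨0, by omega⟩)) (by omega) hC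
  have hsum : ∑ i, b.repr a i • (b i : K) = a := by
    simpa using congrArg (algebraMap (𝓞 K) K) (b.sum_repr a)
  have hσa : ∀ j, |σ j a| = InfinitePlace.ofRealEmbedding (σ j) a := fun j =>
    (InfinitePlace.ofRealEmbedding_apply _ _).symm
  refine ⟨b.repr a, by simpa using ha0, ?_, fun j hj => ?_, ?_⟩
  · rwa [hsum, hσa]
  · have hC' : (C : ℝ) = |(discr K : ℝ)| ^ ((1 : ℝ) / (2 * n - 2)) := by
      rw [NNReal.coe_rpow, coe_nnnorm, Int.norm_eq_abs, Nat.cast_sub (by omega)]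
      ring_nf
    rw [hsum, hσa, ← hC']
    exact haC _ (InfinitePlace.ofRealEmbedding_injective.ne (hσ.ne hj))
  · rw [hsum]
    exact (σ ⟨0, by omega⟩).ne_intCast_of_abs_lt_one (by simpa using ha0) (by rwa [hσa])
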